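/- Suppose the CutWidth W satisfies W ≥ Δ. If a bag A satisfies (n − |A|)·Δ < W, then γ(A) = W. -/

import Mathlib

open Finset

variable {V : Type*} [Fintype V] [DecidableEq V]

/-- The cut of a bag `A`: the number of edges of `G` with exactly one endpoint in `A`. -/
def cut (G : SimpleGraph V) [DecidableRel G.Adj] (A : Finset V) : ℕ :=
  ((A ×ˢ Aᶜ).filter fun p => G.Adj p.1 p.2).card

/-- An `(A–B)`-crusade of length `k+1`: a sequence of bags starting at `A`, ending at `B`,
removing at most one node at each step. -/
def IsCrusade (A B : Finset V) (k : ℕ) (ω : ℕ → Finset V) : Prop :=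
  ω 0 = A ∧ ω k = B ∧ ∀ i < k, (ω i \ ω (i + 1)).card ≤ 1

/-- The width of a crusade: the maximum cut encountered after the first bag. -/
def width (G : SimpleGraph V) [DecidableRel G.Adj] (k : ℕ) (ω : ℕ → Finset V) : ℕ :=
  (Finset.Icc 1 k).sup fun i => cut G (ω i)

/-- The resilience of a bag `A`: the minimum width over all `(A–∅)`-crusades. -/
noncomputable def resilience (G : SimpleGraph V) [DecidableRel G.Adj] (A : Finset V) : ℕ :=
  sInf {w | ∃ (k : ℕ) (ω : ℕ → Finset V), IsCrusade A ∅ k ω ∧ width G k ω = w}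

/-- A crusade is monotone if each bag contains the next. -/
def IsMonotone (k : ℕ) (ω : ℕ → Finset V) : Prop :=
  ∀ i < k, ω (i + 1) ⊆ ω i

/-- The CutWidth of `G`: the minimum width over all monotone `(V–∅)`-crusades. -/
noncomputable def cutWidth (G : SimpleGraph V) [DecidableRel G.Adj] : ℕ :=
  sInf {w | ∃ (k : ℕ) (ω : ℕ → Finset V),
    IsCrusade Finset.univ ∅ k ω ∧ IsMonotone k ω ∧ width G k ω = w}

/-!
Prepending the move `A → V` to an optimal monotone `(V–∅)`-crusade gives `γ(A) ≤ W`. Conversely,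
prefixing an `(A–∅)`-crusade with a descent from `V` to `A` through bags containing `A`, whose cuts
are at most `(n - |A|) Δ < W`, yields a `(V–∅)`-crusade. Its width is at least `W`, since uncrossing
consecutive bags (allowed by submodularity of the cut) makes any `(V–∅)`-crusade monotone without
increasing its width. So the `(A–∅)`-crusade itself reaches a cut `≥ W`.
-/

section Cut

variable (G : SimpleGraph V) [DecidableRel G.Adj]

lemma cut_univ : cut G univ = 0 := by
  simp [cut]

lemma cut_inter_add_cut_union_le (X Y : Finset V) :
    cut G (X ∩ Y) + cut G (X ∪ Y) ≤ cut G X + cut G Y := by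
  set E : Finset V → Finset (V × V) := fun S => (S ×ˢ Sᶜ).filter fun p => G.Adj p.1 p.2
  calc cut G (X ∩ Y) + cut G (X ∪ Y)
      = #(E (X ∩ Y) ∪ E (X ∪ Y)) + #(E (X ∩ Y) ∩ E (X ∪ Y)) :=
        (card_union_add_card_inter _ _).symm
    _ ≤ #(E X ∪ E Y) + #(E X ∩ E Y) := by
        refine add_le_add (card_le_card ?_) (card_le_card ?_) <;> intro p <;>
          simp only [E, mem_union, mem_inter, mem_filter, mem_product, mem_compl] <;> tauto
    _ = cut G X + cut G Y := card_union_add_card_inter _ _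

lemma cut_le_card_compl_mul_maxDegree (S : Finset V) : cut G S ≤ #Sᶜ * G.maxDegree := by
  rw [mul_comm]
  refine card_le_mul_card_image_of_maps_to (f := Prod.snd) (fun p hp => (mem_product.mp
    (mem_filter.mp hp).1).2) _ fun b _ => ?_
  calc #{p ∈ (S ×ˢ Sᶜ).filter (fun p => G.Adj p.1 p.2) | p.2 = b}
      ≤ #(G.neighborFinset b ×ˢ {b}) := card_le_card fun p hp => by
        simp only [mem_filter, mem_product, mem_singleton, SimpleGraph.mem_neighborFinset] at hp ⊢
        exact ⟨hp.2 ▸ hp.1.2.symm, hp.2⟩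
    _ ≤ G.maxDegree := by
        rw [card_product, card_singleton, mul_one, SimpleGraph.card_neighborFinset_eq_degree]
        exact G.degree_le_maxDegree b

end Cut

namespace Crusade

def concat (m : ℕ) (σ ω : ℕ → Finset V) : ℕ → Finset V :=
  fun j => if j ≤ m then σ j else ω (j - m)

def step (X Y : Finset V) : ℕ → Finset V :=
  fun j => if j = 0 then X else Y

noncomputable def descent (A B : Finset V) : ℕ → Finset V :=
  fun j => A ∪ B.filter fun v => j ≤ Fintype.equivFin V v

end Crusade

open Crusade

section Combinators

variable {A B C : Finset V} {m k : ℕ} {σ ω : ℕ → Finset V}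

lemma IsCrusade.concat (hσ : IsCrusade A B m σ) (hω : IsCrusade B C k ω) :
    IsCrusade A C (m + k) (Crusade.concat m σ ω) := by
  obtain ⟨hσ0, hσm, hσstep⟩ := hσ
  obtain ⟨hω0, hωk, hωstep⟩ := hω
  refine ⟨by simp [Crusade.concat, hσ0], ?_, fun j hj => ?_⟩
  · rcases Nat.eq_zero_or_pos k with rfl | hk
    · simp [Crusade.concat, hσm, ← hω0, hωk]
    · simp [Crusade.concat, hk.ne', hωk]
  · unfold Crusade.concat
    rcases lt_trichotomy j m with hjm | rfl | hjm
    · simpa [hjm.le, Nat.succ_le_of_lt hjm] using hσstep j hjm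
    · simpa [hσm, ← hω0] using hωstep 0 (by omega)
    · simpa [hjm.not_ge, show ¬ j + 1 ≤ m by omega, show j + 1 - m = j - m + 1 by omega]
        using hωstep (j - m) (by omega)

lemma isCrusade_step (h : #(A \ B) ≤ 1) : IsCrusade A B 1 (step A B) :=
  ⟨rfl, rfl, fun j hj => by simpa [step, Nat.lt_one_iff.mp hj] using h⟩

lemma isCrusade_descent (h : A ⊆ B) : IsCrusade B A (Fintype.card V) (descent A B) := by
  refine ⟨by simp [descent, h], ?_, fun j _ => card_le_one.mpr fun a ha b hb => ?_⟩
  · ext v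
    simp [descent, (Fintype.equivFin V v).isLt]
  · simp only [descent, mem_sdiff, mem_union, mem_filter, not_or, not_and, not_le] at ha hb
    exact (Fintype.equivFin V).injective (Fin.ext (by grind))

lemma isMonotone_descent (A B : Finset V) : IsMonotone (Fintype.card V) (descent A B) :=
  fun _ _ => union_subset_union subset_rfl (monotone_filter_right _ fun _ h => by omega)

variable (G : SimpleGraph V) [DecidableRel G.Adj]

lemma cut_le_width {i : ℕ} (hi : i ∈ Icc 1 k) : cut G (ω i) ≤ width G k ω :=
  le_sup (f := fun i => cut G (ω i)) hi

lemma width_concat_le :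
    width G (m + k) (concat m σ ω) ≤ max (width G m σ) (width G k ω) := by
  refine Finset.sup_le fun j hj => ?_
  obtain ⟨hj1, hjk⟩ := mem_Icc.mp hj
  by_cases hjm : j ≤ m
  · simpa [concat, hjm] using le_max_of_le_left (cut_le_width G (mem_Icc.mpr ⟨hj1, hjm⟩))
  · simpa [concat, hjm] using
      le_max_of_le_right (cut_le_width G (mem_Icc.mpr ⟨by omega, by omega⟩ : j - m ∈ Icc 1 k))

lemma width_step : width G 1 (step A B) = cut G B := by
  simp [width, step]

lemma width_descent_le : width G (Fintype.card V) (descent A B) ≤ #Aᶜ * G.maxDegree :=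
  Finset.sup_le fun _ _ => (cut_le_card_compl_mul_maxDegree G _).trans <|
    Nat.mul_le_mul_right _ (card_le_card (compl_subset_compl.mpr subset_union_left))

end Combinators

lemma Function.apply_update_le {α β γ : Type*} [DecidableEq α] [Preorder γ] (f : β → γ)
    {ω : α → β} {j : α} {x : β} (h : f x ≤ f (ω j)) (i : α) :
    f (Function.update ω j x i) ≤ f (ω i) := by
  rcases eq_or_ne i j with rfl | hij
  · simpa
  · simp [Function.update_of_ne hij]

section Uncrossing

open Function

variable {A B : Finset V} {k i : ℕ} {ω : ℕ → Finset V}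

lemma IsCrusade.of_sdiff_subset {ω' : ℕ → Finset V} (hω : IsCrusade A B k ω) (h0 : ω' 0 = A)
    (hk : ω' k = B) (hstep : ∀ j < k, ω' j \ ω' (j + 1) ⊆ ω j \ ω (j + 1)) :
    IsCrusade A B k ω' :=
  ⟨h0, hk, fun j hj => (card_le_card (hstep j hj)).trans (hω.2.2 j hj)⟩

lemma IsCrusade.update_union (hω : IsCrusade univ B k ω) (hi : i < k) :
    IsCrusade univ B k (update ω i (ω i ∪ ω (i + 1))) := by
  refine hω.of_sdiff_subset ?_ ?_ fun j _ x => ?_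
  · rcases eq_or_ne i 0 with rfl | hi0
    · simp [hω.1]
    · simp [update_of_ne hi0.symm, hω.1]
  · simp [update_of_ne hi.ne', hω.2.1]
  · simp only [update_apply, mem_sdiff]
    split_ifs <;> grind

lemma IsCrusade.update_inter (hω : IsCrusade A ∅ k ω) (hi : i < k) :
    IsCrusade A ∅ k (update ω (i + 1) (ω i ∩ ω (i + 1))) := by
  refine hω.of_sdiff_subset ?_ ?_ fun j _ x => ?_
  · simp [hω.1]
  · rcases eq_or_ne (i + 1) k with rfl | hik
    · simp [hω.2.1]
    · simp [update_of_ne hik.symm, hω.2.1]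
  · simp only [update_apply, mem_sdiff]
    split_ifs <;> grind

variable (G : SimpleGraph V) [DecidableRel G.Adj]

def uncrossingPotential (k : ℕ) (ω : ℕ → Finset V) : ℕ ×ₗ ℕ :=
  toLex (∑ i ∈ Icc 1 k, cut G (ω i), ∑ i ∈ Icc 1 k, #(ω i))

lemma width_update_le {X : Finset V} (h : cut G X ≤ cut G (ω i)) :
    width G k (update ω i X) ≤ width G k ω :=
  sup_mono_fun fun j _ => apply_update_le (cut G) h j

lemma uncrossingPotential_update_lt_of_cut_lt {X : Finset V} (hi : i ∈ Icc 1 k)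
    (h : cut G X < cut G (ω i)) :
    uncrossingPotential G k (update ω i X) < uncrossingPotential G k ω := by
  have hlt : ∑ j ∈ Icc 1 k, cut G (update ω i X j) < ∑ j ∈ Icc 1 k, cut G (ω j) :=
    sum_lt_sum (fun j _ => apply_update_le (cut G) h.le j) ⟨i, hi, by simpa⟩
  exact Prod.Lex.toLex_lt_toLex'.mpr ⟨hlt.le, fun heq => absurd heq hlt.ne⟩

lemma uncrossingPotential_update_lt_of_card_lt {X : Finset V} (hi : i ∈ Icc 1 k)
    (hcut : cut G X ≤ cut G (ω i)) (hcard : #X < #(ω i)) :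
    uncrossingPotential G k (update ω i X) < uncrossingPotential G k ω := by
  refine Prod.Lex.toLex_lt_toLex'.mpr ⟨?_, fun _ => ?_⟩
  · dsimp only
    exact sum_le_sum fun j _ => apply_update_le (cut G) hcut j
  · exact sum_lt_sum (fun j _ => apply_update_le card hcard.le j) ⟨i, hi, by simpa⟩

end Uncrossing

section Width

variable (G : SimpleGraph V) [DecidableRel G.Adj] {A : Finset V} {k : ℕ} {ω : ℕ → Finset V}

/-- A crusade of least potential among those of no larger width has no non-monotone step: by
submodularity of the cut, one of the two uncrossing moves would apply to it. -/
theorem IsCrusade.exists_isMonotone_width_le (hω : IsCrusade univ ∅ k ω) :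
    ∃ ω', IsCrusade univ ∅ k ω' ∧ IsMonotone k ω' ∧ width G k ω' ≤ width G k ω := by
  obtain ⟨μ, ⟨hμ, hwidth⟩, hmin⟩ :=
    (InvImage.wf (uncrossingPotential G k) wellFounded_lt).has_min
      {ω' | IsCrusade univ ∅ k ω' ∧ width G k ω' ≤ width G k ω} ⟨ω, hω, le_rfl⟩
  refine ⟨μ, hμ, fun i hi => ?_, hwidth⟩
  by_contra hsub
  have hi0 : i ≠ 0 := by rintro rfl; exact hsub (hμ.1 ▸ subset_univ _)
  by_cases hcut : cut G (μ i ∪ μ (i + 1)) < cut G (μ i)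
  · exact hmin _ ⟨hμ.update_union hi, (width_update_le G hcut.le).trans hwidth⟩
      (uncrossingPotential_update_lt_of_cut_lt G (mem_Icc.mpr ⟨by omega, hi.le⟩) hcut)
  · have hcut' : cut G (μ i ∩ μ (i + 1)) ≤ cut G (μ (i + 1)) := by
      have := cut_inter_add_cut_union_le G (μ i) (μ (i + 1))
      omega
    have hcard : #(μ i ∩ μ (i + 1)) < #(μ (i + 1)) :=
      card_lt_card (inf_lt_right.mpr hsub)
    exact hmin _ ⟨hμ.update_inter hi, (width_update_le G hcut').trans hwidth⟩
      (uncrossingPotential_update_lt_of_card_lt G (mem_Icc.mpr ⟨by omega, hi⟩) hcut' hcard)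

lemma cutWidth_le_width (hω : IsCrusade univ ∅ k ω) : cutWidth G ≤ width G k ω := by
  obtain ⟨ω', hω', hmono, hwidth⟩ := hω.exists_isMonotone_width_le G
  exact le_trans (Nat.sInf_le ⟨k, ω', hω', hmono, rfl⟩) hwidth

lemma exists_isMonotone_width_eq_cutWidth :
    ∃ k ω, IsCrusade univ ∅ k ω ∧ IsMonotone k ω ∧ width G k ω = cutWidth G :=
  Nat.sInf_mem (s := {w | ∃ k ω, IsCrusade univ ∅ k ω ∧ IsMonotone k ω ∧ width G k ω = w})
    ⟨_, _, _, isCrusade_descent (subset_univ ∅), isMonotone_descent ∅ univ, rfl⟩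

lemma resilience_le_cutWidth (A : Finset V) : resilience G A ≤ cutWidth G := by
  obtain ⟨k, ω, hω, -, hwidth⟩ := exists_isMonotone_width_eq_cutWidth G
  have hstep : #(A \ univ) ≤ 1 := by rw [sdiff_eq_empty_iff_subset.mpr (subset_univ A)]; simp
  calc resilience G A ≤ width G (1 + k) (concat 1 (step A univ) ω) :=
        Nat.sInf_le ⟨_, _, (isCrusade_step hstep).concat hω, rfl⟩
    _ ≤ max (width G 1 (step A univ)) (width G k ω) := width_concat_le G
    _ = cutWidth G := by rw [width_step, cut_univ, hwidth, Nat.zero_max]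

lemma cutWidth_le_max_width (hω : IsCrusade A ∅ k ω) :
    cutWidth G ≤ max (#Aᶜ * G.maxDegree) (width G k ω) :=
  calc cutWidth G ≤ width G (Fintype.card V + k) (concat _ (descent A univ) ω) :=
        cutWidth_le_width G ((isCrusade_descent (subset_univ A)).concat hω)
    _ ≤ max (width G _ (descent A univ)) (width G k ω) := width_concat_le G
    _ ≤ max (#Aᶜ * G.maxDegree) (width G k ω) := max_le_max_right _ (width_descent_le G)

lemma le_resilience (A : Finset V) {w : ℕ}
    (h : ∀ k ω, IsCrusade A ∅ k ω → w ≤ width G k ω) : w ≤ resilience G A :=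
  le_csInf ⟨_, _, _, isCrusade_descent (empty_subset A), rfl⟩
    fun _ ⟨k, ω, hω, hw⟩ => hw ▸ h k ω hω

end Width

theorem resilience_eq_cutWidth_of_large_general (G : SimpleGraph V) [DecidableRel G.Adj]
    (A : Finset V) (hA : (Fintype.card V - A.card) * G.maxDegree < cutWidth G) :
    resilience G A = cutWidth G := by
  refine (resilience_le_cutWidth G A).antisymm (le_resilience G A fun k ω hω => ?_)
  have hlarge : ¬ cutWidth G ≤ #Aᶜ * G.maxDegree := by rw [card_compl]; omega
  exact (le_max_iff.mp (cutWidth_le_max_width G hω)).resolve_left hlarge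

theorem resilience_eq_cutWidth_of_large (G : SimpleGraph V) [DecidableRel G.Adj]
    (hconn : G.Connected) (hΔ : 0 < G.maxDegree)
    (hW : G.maxDegree ≤ cutWidth G)
    (A : Finset V) (hA : (Fintype.card V - A.card) * G.maxDegree < cutWidth G) :
    resilience G A = cutWidth G :=
  resilience_eq_cutWidth_of_large_general G A hA
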